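/- Let p, q : ℝ → ℝ satisfy the quartic Hamilton equations p' = -(b p^3 + 3c p^2 q + 3d p q^2 + e q^3), q' = a p^3 + 3b p^2 q + 3c p q^2 + d q^3, and let G = (b^2 - ac) p^4 + 2(bc - ad) p^3 q + (3c^2 - 2bd - ae) p^2 q^2 + 2(cd - be) p q^3 + (d^2 - ce) q^4 along the curve. Then p'' = 3 G p and q'' = 3 G q; equivalently, in vector form z = (p, q), z'' = 3 G z. -/

import Mathlib

/-!
The system is the Hamiltonian flow `(p', q') = (-f_q, f_p) / 4` of the binary quartic
`f = a p⁴ + 4b p³q + 6c p²q² + 4d pq³ + e q⁴`. Its second partials are `12` times the quadratics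
`Q_abc = a p² + 2b pq + c q²`, `Q_bcd`, `Q_cde`, and by Euler's identity the cubics split as
`C_abcd = p Q_abc + q Q_bcd`, `C_bcde = p Q_bcd + q Q_cde`. Differentiating `p' = -C_bcde` along
the flow gives `p'' = 3 (C_bcde Q_bcd - C_abcd Q_cde)`; after the Euler splitting the `q`-terms
cancel, leaving `3 (Q_bcd² - Q_abc Q_cde) p`, and the bracket is the Hessian covariant `G` of `f`.
The same computation gives `q'' = 3 G q`.
-/

section BinaryForms

variable {R : Type*} [CommRing R]

def binaryQuadratic (a b c x y : R) : R := a*x^2 + 2*b*x*y + c*y^2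

def binaryCubic (a b c d x y : R) : R := a*x^3 + 3*b*x^2*y + 3*c*x*y^2 + d*y^3

/-- Up to the factor `-1/144`, the Hessian `f_xx f_yy - f_xy²` of the binary quartic
`f = a x⁴ + 4b x³y + 6c x²y² + 4d xy³ + e y⁴`, whose second partials are `12` times the three
quadratics below. -/
def quarticHessian (a b c d e x y : R) : R :=
  binaryQuadratic b c d x y ^ 2 - binaryQuadratic a b c x y * binaryQuadratic c d e x y

theorem binaryCubic_eq_add (a b c d x y : R) :
    binaryCubic a b c d x y = x * binaryQuadratic a b c x y + y * binaryQuadratic b c d x y := by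
  unfold binaryCubic binaryQuadratic
  ring

theorem binaryCubic_mul_sub_eq_quarticHessian_mul_fst (a b c d e x y : R) :
    binaryCubic b c d e x y * binaryQuadratic b c d x y
      - binaryCubic a b c d x y * binaryQuadratic c d e x y = quarticHessian a b c d e x y * x := by
  rw [binaryCubic_eq_add, binaryCubic_eq_add, quarticHessian]
  ring

theorem binaryCubic_mul_sub_eq_quarticHessian_mul_snd (a b c d e x y : R) :
    binaryCubic a b c d x y * binaryQuadratic b c d x y
      - binaryCubic b c d e x y * binaryQuadratic a b c x y = quarticHessian a b c d e x y * y := by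
  rw [binaryCubic_eq_add, binaryCubic_eq_add, quarticHessian]
  ring

end BinaryForms

section QuarticFlow

variable {𝕜 : Type*} [NontriviallyNormedField 𝕜]

theorem HasDerivAt.binaryCubic {x y : 𝕜 → 𝕜} {x' y' t : 𝕜}
    (hx : HasDerivAt x x' t) (hy : HasDerivAt y y' t) (a b c d : 𝕜) :
    HasDerivAt (fun s => binaryCubic a b c d (x s) (y s))
      (3 * (x' * binaryQuadratic a b c (x t) (y t) + y' * binaryQuadratic b c d (x t) (y t))) t := by
  have h := ((((hx.pow 3).const_mul a).add (((hx.pow 2).const_mul (3*b)).mul hy)).add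
    ((hx.const_mul (3*c)).mul (hy.pow 2))).add ((hy.pow 3).const_mul d)
  refine h.congr_deriv ?_
  simp only [binaryQuadratic, Pi.pow_apply]
  push_cast
  ring

theorem hasDerivAt_deriv_of_quartic_hamiltonian {a b c d e : 𝕜} {x y : 𝕜 → 𝕜}
    (hx : Differentiable 𝕜 x) (hy : Differentiable 𝕜 y)
    (hx' : ∀ s, deriv x s = -binaryCubic b c d e (x s) (y s))
    (hy' : ∀ s, deriv y s = binaryCubic a b c d (x s) (y s)) (t : 𝕜) :
    HasDerivAt (deriv x) (3 * quarticHessian a b c d e (x t) (y t) * x t) t ∧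
      HasDerivAt (deriv y) (3 * quarticHessian a b c d e (x t) (y t) * y t) t := by
  have hX : HasDerivAt x (-binaryCubic b c d e (x t) (y t)) t := hx' t ▸ (hx t).hasDerivAt
  have hY : HasDerivAt y (binaryCubic a b c d (x t) (y t)) t := hy' t ▸ (hy t).hasDerivAt
  rw [funext hx', funext hy']
  constructor
  · refine (hX.binaryCubic hY b c d e).neg.congr_deriv ?_
    rw [mul_assoc, ← binaryCubic_mul_sub_eq_quarticHessian_mul_fst]
    ring
  · refine (hX.binaryCubic hY a b c d).congr_deriv ?_
    rw [mul_assoc, ← binaryCubic_mul_sub_eq_quarticHessian_mul_snd]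
    ring

end QuarticFlow

theorem quartic_vector_second_order_general (a b c d e : ℝ) (p q : ℝ → ℝ)
    (hp1 : Differentiable ℝ p) (hq1 : Differentiable ℝ q)
    (hp : ∀ t, deriv p t = -(b*(p t)^3 + 3*c*(p t)^2*(q t) + 3*d*(p t)*(q t)^2 + e*(q t)^3))
    (hq : ∀ t, deriv q t = a*(p t)^3 + 3*b*(p t)^2*(q t) + 3*c*(p t)*(q t)^2 + d*(q t)^3) :
    ∀ t,
      let G := (b^2 - a*c)*(p t)^4 + 2*(b*c - a*d)*(p t)^3*(q t)
        + (3*c^2 - 2*b*d - a*e)*(p t)^2*(q t)^2 + 2*(c*d - b*e)*(p t)*(q t)^3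
        + (d^2 - c*e)*(q t)^4
      deriv (deriv p) t = 3 * G * p t ∧ deriv (deriv q) t = 3 * G * q t := by
  intro t G
  have hG : G = quarticHessian a b c d e (p t) (q t) := by
    simp only [G, quarticHessian, binaryQuadratic]
    ring
  obtain ⟨hpp, hqq⟩ := hasDerivAt_deriv_of_quartic_hamiltonian hp1 hq1 hp hq t
  rw [hG]
  exact ⟨hpp.deriv, hqq.deriv⟩

theorem quartic_vector_second_order (a b c d e : ℝ) (p q : ℝ → ℝ)
    (hp1 : Differentiable ℝ p) (hq1 : Differentiable ℝ q)
    (hp2 : Differentiable ℝ (deriv p)) (hq2 : Differentiable ℝ (deriv q))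
    (hp : ∀ t, deriv p t = -(b*(p t)^3 + 3*c*(p t)^2*(q t) + 3*d*(p t)*(q t)^2 + e*(q t)^3))
    (hq : ∀ t, deriv q t = a*(p t)^3 + 3*b*(p t)^2*(q t) + 3*c*(p t)*(q t)^2 + d*(q t)^3) :
    ∀ t,
      let G := (b^2 - a*c)*(p t)^4 + 2*(b*c - a*d)*(p t)^3*(q t)
        + (3*c^2 - 2*b*d - a*e)*(p t)^2*(q t)^2 + 2*(c*d - b*e)*(p t)*(q t)^3
        + (d^2 - c*e)*(q t)^4
      deriv (deriv p) t = 3 * G * p t ∧ deriv (deriv q) t = 3 * G * q t :=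
  quartic_vector_second_order_general a b c d e p q hp1 hq1 hp hq
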